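/- In the specific null foliation adapted frame (s, M, α♯, n), where M is the vector field with components M^r = g^{r3}g^{34} − g^{33}g^{r4} in a null foliation adapted chart (so M♭ = g³⁴dx³ − g³³dx⁴ is null and M ∈ ker F), one has *d*M♭ = 0 (equivalently ∇_μ M^μ = 0) if and only if dM♭(n,M) + dα(M,α♯) + ds♭(M,s) = 0. -/

import Mathlib

noncomputable section

namespace FFE

/-- Points of the chart domain `U_p ⊆ M` of a spacetime, in coordinates
`(x¹,…,x⁴)` (indexed here by `0,…,3`, so `x³ ↦ 2` and `x⁴ ↦ 3`). -/
abbrev Pt : Type := Fin 4 → ℝ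

/-- Scalar fields. -/
abbrev Sc : Type := Pt → ℝ

/-- Vector fields, given by their chart components. -/
abbrev Vec : Type := Fin 4 → Sc

/-- Covector fields (1-forms), given by their chart components. -/
abbrev Cov : Type := Fin 4 → Sc

/-- 2-forms, given by their (antisymmetric) chart components. -/
abbrev Form2 : Type := Fin 4 → Fin 4 → Sc

/-- Partial derivative along the `i`-th coordinate. -/
def pd (i : Fin 4) (f : Sc) : Sc := fun p => fderiv ℝ f p (Pi.single i 1)

/-- Smoothness of a scalar field. -/
def Smooth (f : Sc) : Prop := ContDiff ℝ (⊤ : ℕ∞) f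

/-- Directional derivative of a scalar field along a vector field. -/
def act (v : Vec) (f : Sc) : Sc := ∑ i, v i * pd i f

/-- Lie bracket of vector fields. -/
def bracket (v w : Vec) : Vec := fun μ => act v (w μ) - act w (v μ)

/-- Exterior derivative of a 1-form, evaluated on two vector fields:
`dω(v,w) = (∂_μ ω_ν − ∂_ν ω_μ) v^μ w^ν`. -/
def dOne (ω : Cov) (v w : Vec) : Sc :=
  ∑ μ, ∑ ν, (pd μ (ω ν) - pd ν (ω μ)) * v μ * w ν

/-- `log |f|`. -/
def logabs (f : Sc) : Sc := fun p => Real.log |f p|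

/-- A (smooth) Lorentzian metric of signature `(-1,1,1,1)`, given in a chart by its
covariant components `gdown`, contravariant components `ginv`, and volume factor
`vol = √(−det g)`. -/
structure Lorentzian where
  gdown : Fin 4 → Fin 4 → Sc
  ginv : Fin 4 → Fin 4 → Sc
  vol : Sc
  smooth_gdown : ∀ μ ν, Smooth (gdown μ ν)
  smooth_ginv : ∀ μ ν, Smooth (ginv μ ν)
  smooth_vol : Smooth vol
  symm_gdown : ∀ μ ν, gdown μ ν = gdown ν μ
  symm_ginv : ∀ μ ν, ginv μ ν = ginv ν μ
  inv_gdown : ∀ μ ν p, (∑ ρ, ginv μ ρ p * gdown ρ ν p) = if μ = ν then 1 else 0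
  vol_pos : ∀ p, 0 < vol p
  vol_sq : ∀ p, vol p ^ 2 = -Matrix.det (Matrix.of fun μ ν => gdown μ ν p)
  signature : ∀ p, ∃ e : Fin 4 → Fin 4 → ℝ, ∀ i j,
    (∑ μ, ∑ ν, gdown μ ν p * e i μ * e j ν) =
      if i = j then (if i = 0 then -1 else 1) else 0

namespace Lorentzian

variable (g : Lorentzian)

/-- Lowering an index: `v ↦ v♭`. -/
def flat (v : Vec) : Cov := fun μ => ∑ ν, g.gdown μ ν * v ν

/-- Raising an index: `ω ↦ ω♯`. -/
def sharp (ω : Cov) : Vec := fun μ => ∑ ν, g.ginv μ ν * ω ν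

/-- Metric pairing `g(v,w)` of vector fields. -/
def inner (v w : Vec) : Sc := ∑ μ, ∑ ν, g.gdown μ ν * v μ * w ν

/-- Christoffel symbols of the Levi-Civita connection. -/
def christoffel (μ ν ρ : Fin 4) : Sc := fun p =>
  (1 / 2) * ∑ σ, g.ginv μ σ p *
    (pd ν (g.gdown σ ρ) p + pd ρ (g.gdown σ ν) p - pd σ (g.gdown ν ρ) p)

/-- Covariant derivative `∇_v w` of the Levi-Civita connection. -/
def nabla (v w : Vec) : Vec := fun μ =>
  (∑ ν, v ν * pd ν (w μ)) + ∑ ν, ∑ ρ, g.christoffel μ ν ρ * v ν * w ρ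

/-- Divergence `∇_μ X^μ = (1/√(−g)) ∂_μ (√(−g) X^μ)`. -/
def div (v : Vec) : Sc := fun p =>
  (g.vol p)⁻¹ * ∑ μ, pd μ (fun q => g.vol q * v μ q) p

/-- Raising both indices of a 2-form. -/
def up2 (F : Form2) : Form2 := fun μ ν => ∑ ρ, ∑ σ, g.ginv μ ρ * g.ginv ν σ * F ρ σ

/-- The full contraction `F_{μν} F^{μν}`. -/
def contract2 (F : Form2) : Sc := ∑ μ, ∑ ν, F μ ν * g.up2 F μ ν

/-- The current density vector `j = *(d*F)`, in components
`j^μ = (1/√(−g)) ∂_ν (√(−g) F^{μν})`. -/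
def current (F : Form2) : Vec := fun μ => fun p =>
  (g.vol p)⁻¹ * ∑ ν, pd ν (fun q => g.vol q * g.up2 F μ ν q) p

/-- `F` is a null 2-form: `F_{μν}F^{μν} = 0`. -/
def IsNull (F : Form2) : Prop := g.contract2 F = 0

/-- The force-free condition `i_{j♯} F = 0` for the current `j` of `F`. -/
def ForceFree (F : Form2) : Prop := ∀ ν, (∑ μ, F μ ν * g.current F μ) = 0

end Lorentzian

/-- `dF = 0` for a 2-form. -/
def Closed (F : Form2) : Prop :=
  ∀ μ ν ρ, pd μ (F ν ρ) + pd ν (F ρ μ) + pd ρ (F μ ν) = 0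

/-- The Levi-Civita alternating symbol. -/
def eps (μ ν ρ σ : Fin 4) : ℝ :=
  Matrix.det (Matrix.of fun i j => if (![μ, ν, ρ, σ] i) = j then (1 : ℝ) else 0)

/-- Hodge star of a 2-form: `(*F)_{μν} = ½ √(−g) ε_{μνρσ} F^{ρσ}`. -/
def Lorentzian.hodge2 (g : Lorentzian) (F : Form2) : Form2 := fun μ ν => fun p =>
  (1 / 2) * g.vol p * ∑ ρ, ∑ σ, eps μ ν ρ σ * g.up2 F ρ σ p

/-- Exterior derivative of a 2-form (components of the 3-form `dG`). -/
def dTwo (G : Form2) : Fin 4 → Fin 4 → Fin 4 → Sc := fun μ ν ρ =>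
  pd μ (G ν ρ) + pd ν (G ρ μ) + pd ρ (G μ ν)

/-- The (scalar density representing the) wedge product of a 3-form with a 1-form. -/
def wedge31 (J : Fin 4 → Fin 4 → Fin 4 → Sc) (ω : Cov) : Sc := fun p =>
  ∑ μ, ∑ ν, ∑ ρ, ∑ σ, eps μ ν ρ σ * J μ ν ρ p * ω σ p

/-- The chart is adapted to a *null* foliation: on the leaves (the level sets of
`(x³,x⁴)`) the metric is degenerate, i.e. `g³³g⁴⁴ − (g³⁴)² = 0`. -/
def Lorentzian.NullAdapted (g : Lorentzian) : Prop :=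
  ∀ p, g.ginv 2 2 p * g.ginv 3 3 p - (g.ginv 2 3 p) ^ 2 = 0

/-- `M^r = g^{r3} g^{34} − g^{33} g^{r4}` (coordinates `x³,x⁴` are indices `2,3`). -/
def Mvec (g : Lorentzian) : Vec := fun r =>
  g.ginv r 2 * g.ginv 2 3 - g.ginv 2 2 * g.ginv r 3

/-- `N^r = g^{r3} g^{44} − g^{34} g^{r4}`. -/
def Nvec (g : Lorentzian) : Vec := fun r =>
  g.ginv r 2 * g.ginv 3 3 - g.ginv 2 3 * g.ginv r 3

/-- A null foliation adapted frame `(s, l, α♯, n)`: `l, n` null, `s, α♯` unit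
spacelike, `g(n,l) = −1`, all other frame inner products zero, spanning `TM`. -/
structure Frame (g : Lorentzian) (s l a n : Vec) : Prop where
  smooth_s : ∀ μ, Smooth (s μ)
  smooth_l : ∀ μ, Smooth (l μ)
  smooth_a : ∀ μ, Smooth (a μ)
  smooth_n : ∀ μ, Smooth (n μ)
  l_null : g.inner l l = 0
  n_null : g.inner n n = 0
  s_unit : g.inner s s = 1
  a_unit : g.inner a a = 1
  n_l : g.inner n l = -1
  n_s : g.inner n s = 0
  n_a : g.inner n a = 0
  l_s : g.inner l s = 0
  l_a : g.inner l a = 0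
  s_a : g.inner s a = 0
  spans : ∀ (p : Pt) (v : Fin 4 → ℝ), ∃ c : Fin 4 → ℝ,
    ∀ μ, v μ = c 0 * s μ p + c 1 * l μ p + c 2 * a μ p + c 3 * n μ p

/-- `l` is a pregeodesic vector field: `∇_l l` is everywhere proportional to `l`. -/
def Pregeodesic (g : Lorentzian) (l : Vec) : Prop :=
  ∃ f : Sc, g.nabla l l = fun μ => f * l μ

/-- The null expansion scalar `θ = ½[g(∇_s l, s) + g(∇_{α♯} l, α♯)]`. -/
def theta (g : Lorentzian) (l s a : Vec) : Sc :=
  (1 / 2 : Sc) * (g.inner (g.nabla s l) s + g.inner (g.nabla a l) a)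

/-- The foliation admits an equipartition of null mean curvature w.r.t. `l`:
`θ = g(∇_s l, s)`. -/
def Equipartition (g : Lorentzian) (l s a : Vec) : Prop :=
  theta g l s a = g.inner (g.nabla s l) s

/-- `l` admits a uniform equipartition of null mean curvature:
`g(∇_s l, α♯) + g(∇_{α♯} l, s) = 0`. -/
def UniformEquipartition (g : Lorentzian) (l s a : Vec) : Prop :=
  g.inner (g.nabla s l) a + g.inner (g.nabla a l) s = 0

/-- `v` lies in the kernel of the 2-form `F`. -/
def InKernel (F : Form2) (v : Vec) : Prop := ∀ μ, (∑ ν, F μ ν * v ν) = 0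

/-- The kernel of `F` consists at each point exactly of the vectors tangent to the
leaves of the adapted chart (those with vanishing `x³`- and `x⁴`-components). -/
def KernelExact (F : Form2) : Prop :=
  ∀ (p : Pt) (v : Fin 4 → ℝ),
    (∀ μ, (∑ ν, F μ ν p * v ν) = 0) ↔ (v 2 = 0 ∧ v 3 = 0)

/-- The kernel of `F` is at each point exactly the span of `v` and `w`. -/
def KernelSpan (F : Form2) (v w : Vec) : Prop :=
  ∀ (p : Pt) (x : Fin 4 → ℝ),
    (∀ μ, (∑ ν, F μ ν p * x ν) = 0) ↔ ∃ c d : ℝ, ∀ μ, x μ = c * v μ p + d * w μ p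

/-- `u` is a function of `(x³,x⁴)` alone (constant along the leaves). -/
def LeafConstant (u : Sc) : Prop := pd 0 u = 0 ∧ pd 1 u = 0

/-- The 2-form `F = u dx³ ∧ dx⁴`. -/
def chartF (u : Sc) : Form2 := fun μ ν =>
  u * ((if μ = 2 ∧ ν = 3 then (1 : Sc) else 0) - if μ = 3 ∧ ν = 2 then (1 : Sc) else 0)

/-- The transition factor `κ = (α₃ l♭₄ − α₄ l♭₃)⁻¹`. -/
def kappa (g : Lorentzian) (a l : Vec) : Sc :=
  (g.flat a 2 * g.flat l 3 - g.flat a 3 * g.flat l 2)⁻¹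

/-- The 2-form `F = (u·κ) α ∧ l♭` (with `α = a♭`). -/
def frameF (g : Lorentzian) (a l : Vec) (u : Sc) : Form2 := fun μ ν =>
  u * kappa g a l * (g.flat a μ * g.flat l ν - g.flat a ν * g.flat l μ)

end FFE

/-! In a null frame `(s, l, α♯, n)` completeness gives
`g^{μν} = s^μ s^ν + α^μ α^ν − n^μ l^ν − l^μ n^ν`; since Jacobi's formula turns
`(1/√(−g)) ∂_μ(√(−g) l^μ)` into the trace `∂_μ l^μ + Γ^μ_{μρ} l^ρ` of `∇l`, this yields
`∇_μ l^μ = g(∇_s l, s) + g(∇_α l, α) − g(∇_n l, l) − g(∇_l l, n)`.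
Torsion-freeness gives `dω♭(v, u) = g(∇_v ω, u) − g(∇_u ω, v)`, and by metric compatibility the
constancy of `g(l,l)`, `g(α,α)`, `g(s,s)`, `g(α,l)`, `g(s,l)` makes `g(∇_n l, l)`, `g(∇_l α, α)`,
`g(∇_l s, s)` vanish and gives `g(∇_α α, l) = −g(∇_α l, α)`, `g(∇_s s, l) = −g(∇_s l, s)`.
So `∇_μ l^μ = dl♭(n, l) + dα(l, α♯) + ds♭(l, s)` holds identically; take `l = M`. -/

theorem Matrix.det_updateRow_eq_of_mul_eq_one {n R : Type*} [Fintype n] [DecidableEq n]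
    [CommRing R] {A B : Matrix n n R} (h : B * A = 1) (j : n) (r : n → R) :
    (A.updateRow j r).det = (∑ k, r k * B k j) * A.det := by
  have hadj : A.adjugate = A.det • B :=
    calc A.adjugate = B * A * A.adjugate := by rw [h, Matrix.one_mul]
      _ = A.det • B := by
        rw [Matrix.mul_assoc, Matrix.mul_adjugate, Matrix.mul_smul, Matrix.mul_one]
  rw [← Matrix.cramer_transpose_apply, Matrix.cramer_eq_adjugate_mulVec,
    ← Matrix.adjugate_transpose, hadj]
  simp only [Matrix.mulVec, dotProduct, Matrix.transpose_apply, Matrix.smul_apply, smul_eq_mul,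
    Finset.sum_mul]
  exact Finset.sum_congr rfl fun k _ => by ring

namespace FFE

open Finset

theorem Smooth.differentiable {f : Sc} (hf : Smooth f) : Differentiable ℝ f :=
  ContDiff.differentiable hf (by simp)

section PartialDerivative

variable {f h : Sc} {i : Fin 4} {p : Pt}

theorem pd_const (c : ℝ) : pd i (fun _ => c) p = 0 := by
  simp [pd]

theorem pd_neg : pd i (-f) p = -pd i f p := by
  simp [pd, show -f = fun q => -f q from rfl]

theorem pd_mul (hf : DifferentiableAt ℝ f p) (hh : DifferentiableAt ℝ h p) :
    pd i (f * h) p = f p * pd i h p + h p * pd i f p := by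
  simp [pd, fderiv_mul hf hh]

theorem pd_sum {ι : Type*} (s : Finset ι) {F : ι → Sc}
    (hF : ∀ j ∈ s, DifferentiableAt ℝ (F j) p) :
    pd i (∑ j ∈ s, F j) p = ∑ j ∈ s, pd i (F j) p := by
  simp only [pd, fderiv_sum hF, _root_.sum_apply]

theorem pd_det {A : Fin 4 → Fin 4 → Sc} (hA : ∀ μ ν, DifferentiableAt ℝ (A μ ν) p) :
    pd i (fun q => (Matrix.of fun μ ν => A μ ν q).det) p =
      ∑ μ, ((Matrix.of fun μ ν => A μ ν p).updateRow μ fun ν => pd i (A μ ν) p).det := by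
  let det : ContinuousMultilinearMap ℝ (fun _ : Fin 4 => Fin 4 → ℝ) ℝ :=
    { Matrix.detRowAlternating.toMultilinearMap with cont := continuous_id.matrix_det }
  have hrows : HasFDerivAt (fun q μ ν => A μ ν q)
      (ContinuousLinearMap.pi fun μ => ContinuousLinearMap.pi fun ν => fderiv ℝ (A μ ν) p) p :=
    hasFDerivAt_pi.2 fun μ => hasFDerivAt_pi.2 fun ν => (hA μ ν).hasFDerivAt
  have hdet : fderiv ℝ (det ∘ fun q μ ν => A μ ν q) p = _ :=
    ((det.hasFDerivAt _).comp p hrows).fderiv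
  rw [pd, show (fun q => (Matrix.of fun μ ν => A μ ν q).det) = det ∘ fun q μ ν => A μ ν q
    from rfl, hdet]
  simp only [ContinuousLinearMap.comp_apply, ContinuousLinearMap.coe_pi',
    ContinuousMultilinearMap.linearDeriv_apply]
  rfl

end PartialDerivative

theorem act_const (v : Vec) (c : ℝ) : act v (fun _ => c) = 0 := by
  funext p
  simp [act, pd_const]

namespace Lorentzian

variable (g : Lorentzian)

theorem differentiable_gdown (μ ν : Fin 4) : Differentiable ℝ (g.gdown μ ν) :=
  (g.smooth_gdown μ ν).differentiable

theorem ginv_mul_gdown (p : Pt) :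
    (Matrix.of fun μ ν => g.ginv μ ν p) * (Matrix.of fun μ ν => g.gdown μ ν p) = 1 := by
  ext μ ν
  simp [Matrix.mul_apply, g.inv_gdown, Matrix.one_apply]

theorem sum_ginv_mul_gdown (σ β : Fin 4) (p : Pt) :
    ∑ α, g.ginv α σ p * g.gdown α β p = if σ = β then 1 else 0 := by
  simp_rw [g.symm_ginv _ σ, g.inv_gdown]

theorem inner_apply (v w : Vec) (p : Pt) :
    g.inner v w p = ∑ μ, ∑ ν, g.gdown μ ν p * v μ p * w ν p := by
  simp [inner]

theorem inner_comm (v w : Vec) : g.inner v w = g.inner w v := by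
  funext p
  rw [inner_apply, inner_apply, Finset.sum_comm]
  exact sum_congr rfl fun μ _ => sum_congr rfl fun ν _ => by rw [g.symm_gdown ν μ]; ring

theorem flat_apply (w : Vec) (ν : Fin 4) (p : Pt) :
    g.flat w ν p = ∑ σ, g.gdown ν σ p * w σ p := by
  simp [flat]

theorem pd_vol (ρ : Fin 4) (p : Pt) :
    pd ρ g.vol p = (1 / 2) * g.vol p * ∑ α, ∑ β, g.ginv α β p * pd ρ (g.gdown α β) p := by
  have hdet : (fun q => (Matrix.of fun μ ν => g.gdown μ ν q).det) = -(g.vol * g.vol) := by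
    funext q
    simp [← sq, g.vol_sq q]
  have hvol := g.smooth_vol.differentiable p
  have h := pd_det (i := ρ) fun μ ν => g.differentiable_gdown μ ν p
  simp only [Matrix.det_updateRow_eq_of_mul_eq_one (g.ginv_mul_gdown p), Matrix.of_apply, hdet,
    pd_neg, pd_mul hvol hvol, congrFun hdet p, Pi.neg_apply, Pi.mul_apply] at h
  have htr : ∑ μ, ∑ k, pd ρ (g.gdown μ k) p * g.ginv k μ p =
      ∑ α, ∑ β, g.ginv α β p * pd ρ (g.gdown α β) p := by
    simp_rw [g.symm_ginv _ (_ : Fin 4), mul_comm (pd ρ _ p)]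
  rw [← Finset.sum_mul, htr] at h
  apply mul_left_cancel₀ (g.vol_pos p).ne'
  linear_combination (-1 / 2 : ℝ) * h

/-- Christoffel symbols of the first kind `Γ_{σμν}`. -/
def christoffelFirst (σ μ ν : Fin 4) : Sc := fun p =>
  (1 / 2) * (pd μ (g.gdown σ ν) p + pd ν (g.gdown σ μ) p - pd σ (g.gdown μ ν) p)

theorem christoffel_eq_sum (μ ν ρ : Fin 4) (p : Pt) :
    g.christoffel μ ν ρ p = ∑ σ, g.ginv μ σ p * g.christoffelFirst σ ν ρ p := by
  rw [christoffel, mul_sum]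
  exact sum_congr rfl fun σ _ => by rw [christoffelFirst]; ring

theorem sum_gdown_mul_christoffel (β μ ρ : Fin 4) (p : Pt) :
    ∑ α, g.gdown α β p * g.christoffel α μ ρ p = g.christoffelFirst β μ ρ p := by
  calc ∑ α, g.gdown α β p * g.christoffel α μ ρ p
      = ∑ α, ∑ σ, g.gdown α β p * (g.ginv α σ p * g.christoffelFirst σ μ ρ p) := by
        simp only [christoffel_eq_sum, mul_sum]
    _ = ∑ σ, (∑ α, g.ginv α σ p * g.gdown α β p) * g.christoffelFirst σ μ ρ p := by
        rw [Finset.sum_comm]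
        simp only [sum_mul]
        exact sum_congr rfl fun _ _ => sum_congr rfl fun _ _ => by ring
    _ = g.christoffelFirst β μ ρ p := by simp [sum_ginv_mul_gdown]

theorem christoffelFirst_comm (σ μ ν : Fin 4) (p : Pt) :
    g.christoffelFirst σ μ ν p = g.christoffelFirst σ ν μ p := by
  rw [christoffelFirst, christoffelFirst, g.symm_gdown μ ν]
  ring

theorem christoffelFirst_add_christoffelFirst (σ μ ρ : Fin 4) (p : Pt) :
    g.christoffelFirst σ μ ρ p + g.christoffelFirst ρ μ σ p = pd μ (g.gdown σ ρ) p := by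
  rw [christoffelFirst, christoffelFirst, g.symm_gdown ρ σ, g.symm_gdown ρ μ, g.symm_gdown μ σ]
  ring

theorem sum_christoffel_self (ρ : Fin 4) (p : Pt) :
    ∑ μ, g.christoffel μ μ ρ p = (1 / 2) * ∑ α, ∑ β, g.ginv α β p * pd ρ (g.gdown α β) p := by
  have hswap : ∑ μ, ∑ σ, g.ginv μ σ p * pd μ (g.gdown σ ρ) p =
      ∑ μ, ∑ σ, g.ginv μ σ p * pd σ (g.gdown μ ρ) p := by
    rw [Finset.sum_comm]
    exact sum_congr rfl fun σ _ => sum_congr rfl fun μ _ => by rw [g.symm_ginv σ μ]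
  have hmid : ∑ μ, ∑ σ, g.ginv μ σ p * pd ρ (g.gdown σ μ) p =
      ∑ α, ∑ β, g.ginv α β p * pd ρ (g.gdown α β) p :=
    sum_congr rfl fun μ _ => sum_congr rfl fun σ _ => by rw [g.symm_gdown σ μ]
  have hexpand (μ : Fin 4) : g.christoffel μ μ ρ p = (1 / 2) *
      (∑ σ, g.ginv μ σ p * pd μ (g.gdown σ ρ) p + ∑ σ, g.ginv μ σ p * pd ρ (g.gdown σ μ) p -
        ∑ σ, g.ginv μ σ p * pd σ (g.gdown μ ρ) p) := by
    simp only [christoffel, mul_add, mul_sub, sum_add_distrib, sum_sub_distrib]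
  rw [sum_congr rfl fun μ _ => hexpand μ, ← mul_sum, sum_sub_distrib, sum_add_distrib, hswap, hmid]
  ring

/-- `covD w μ σ = (∇_μ w)^σ`. -/
def covD (w : Vec) (μ σ : Fin 4) : Sc := pd μ (w σ) + ∑ ρ, g.christoffel σ μ ρ * w ρ

theorem covD_apply (w : Vec) (μ σ : Fin 4) (p : Pt) :
    g.covD w μ σ p = pd μ (w σ) p + ∑ ρ, g.christoffel σ μ ρ p * w ρ p := by
  simp [covD]

theorem nabla_apply (v w : Vec) (σ : Fin 4) (p : Pt) :
    g.nabla v w σ p = ∑ μ, v μ p * g.covD w μ σ p := by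
  simp only [nabla, covD_apply, Pi.add_apply, Finset.sum_apply, Pi.mul_apply, mul_add,
    sum_add_distrib, mul_sum]
  congr 1
  exact sum_congr rfl fun _ _ => sum_congr rfl fun _ _ => by ring

theorem div_eq_sum_covD {w : Vec} (hw : ∀ μ, Differentiable ℝ (w μ)) :
    g.div w = ∑ μ, g.covD w μ μ := by
  funext p
  have hterm (μ : Fin 4) : pd μ (fun q => g.vol q * w μ q) p = g.vol p *
      (pd μ (w μ) p + w μ p * ((1 / 2) * ∑ α, ∑ β, g.ginv α β p * pd μ (g.gdown α β) p)) := by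
    rw [show (fun q => g.vol q * w μ q) = g.vol * w μ from rfl,
      pd_mul (g.smooth_vol.differentiable p) (hw μ p), g.pd_vol]
    ring
  rw [Lorentzian.div, sum_congr rfl fun μ _ => hterm μ, ← mul_sum,
    inv_mul_cancel_left₀ (g.vol_pos p).ne', Finset.sum_apply]
  simp only [covD_apply, sum_add_distrib]
  congr 1
  rw [Finset.sum_comm]
  exact sum_congr rfl fun ρ _ => by rw [← sum_mul, sum_christoffel_self]; ring

/-- `covDFlat w μ ν = (∇_μ w)_ν`. -/
def covDFlat (w : Vec) (μ ν : Fin 4) : Sc := ∑ α, g.gdown α ν * g.covD w μ α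

theorem covDFlat_apply (w : Vec) (μ ν : Fin 4) (p : Pt) :
    g.covDFlat w μ ν p =
      ∑ α, g.gdown α ν p * pd μ (w α) p + ∑ ρ, g.christoffelFirst ν μ ρ p * w ρ p := by
  simp only [covDFlat, Finset.sum_apply, Pi.mul_apply, covD_apply, mul_add, sum_add_distrib,
    mul_sum]
  congr 1
  rw [Finset.sum_comm]
  exact sum_congr rfl fun ρ _ => by
    rw [← sum_gdown_mul_christoffel, sum_mul]
    exact sum_congr rfl fun _ _ => by ring

theorem sum_covD_self (w : Vec) (p : Pt) :
    ∑ μ, g.covD w μ μ p = ∑ μ, ∑ ν, g.ginv μ ν p * g.covDFlat w μ ν p := by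
  refine sum_congr rfl fun μ _ => ?_
  simp only [covDFlat, Finset.sum_apply, Pi.mul_apply, mul_sum]
  rw [Finset.sum_comm]
  have hδ (α : Fin 4) : ∑ ν, g.ginv μ ν p * (g.gdown α ν p * g.covD w μ α p) =
      (if μ = α then 1 else 0) * g.covD w μ α p := by
    rw [← g.inv_gdown μ α p, sum_mul]
    exact sum_congr rfl fun ν _ => by rw [g.symm_gdown α ν]; ring
  simp [hδ]

theorem inner_nabla (v w u : Vec) (p : Pt) :
    g.inner (g.nabla v w) u p = ∑ μ, ∑ ν, v μ p * u ν p * g.covDFlat w μ ν p := by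
  simp only [inner_apply, nabla_apply, covDFlat, Finset.sum_apply, Pi.mul_apply,
    Fin.sum_univ_four]
  ring

theorem pd_flat {p : Pt} {w : Vec} (hw : ∀ σ, DifferentiableAt ℝ (w σ) p) (μ ν : Fin 4) :
    pd μ (g.flat w ν) p = g.covDFlat w μ ν p + ∑ ρ, g.christoffelFirst ρ μ ν p * w ρ p := by
  have hterm (σ : Fin 4) : pd μ (g.gdown ν σ * w σ) p = g.gdown σ ν p * pd μ (w σ) p +
      (g.christoffelFirst ν μ σ p + g.christoffelFirst σ μ ν p) * w σ p := by
    rw [pd_mul (g.differentiable_gdown ν σ p) (hw σ), g.christoffelFirst_add_christoffelFirst,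
      g.symm_gdown ν σ]
    ring
  rw [flat, pd_sum _ fun σ _ => (g.differentiable_gdown ν σ p).mul (hw σ),
    sum_congr rfl fun σ _ => hterm σ, covDFlat_apply]
  simp only [add_mul, sum_add_distrib]
  ring

theorem pd_flat_sub_pd_flat {p : Pt} {w : Vec} (hw : ∀ σ, DifferentiableAt ℝ (w σ) p)
    (μ ν : Fin 4) :
    pd μ (g.flat w ν) p - pd ν (g.flat w μ) p = g.covDFlat w μ ν p - g.covDFlat w ν μ p := by
  have hsymm :
      ∑ ρ, g.christoffelFirst ρ ν μ p * w ρ p = ∑ ρ, g.christoffelFirst ρ μ ν p * w ρ p :=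
    sum_congr rfl fun ρ _ => by rw [g.christoffelFirst_comm]
  rw [g.pd_flat hw, g.pd_flat hw, hsymm]
  ring

theorem dOne_flat {w : Vec} (hw : ∀ σ, Differentiable ℝ (w σ)) (v u : Vec) :
    dOne (g.flat w) v u = g.inner (g.nabla v w) u - g.inner (g.nabla u w) v := by
  funext p
  have hdOne : dOne (g.flat w) v u p =
      ∑ μ, ∑ ν, (pd μ (g.flat w ν) p - pd ν (g.flat w μ) p) * v μ p * u ν p := by
    simp [dOne]
  simp only [hdOne, g.pd_flat_sub_pd_flat fun σ => hw σ p, Pi.sub_apply, inner_nabla,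
    Fin.sum_univ_four]
  ring

theorem pd_inner {p : Pt} {v w : Vec} (hv : ∀ σ, DifferentiableAt ℝ (v σ) p)
    (hw : ∀ σ, DifferentiableAt ℝ (w σ) p) (μ : Fin 4) :
    pd μ (g.inner v w) p =
      ∑ ν, g.covDFlat v μ ν p * w ν p + ∑ ν, g.covDFlat w μ ν p * v ν p := by
  have hflat : g.inner v w = ∑ ν, g.flat v ν * w ν := by
    funext q
    simp only [inner_apply, Finset.sum_apply, Pi.mul_apply, flat_apply, sum_mul]
    rw [Finset.sum_comm]
    exact sum_congr rfl fun ν _ => sum_congr rfl fun α _ => by rw [g.symm_gdown α ν]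
  have hdflat (ν : Fin 4) : DifferentiableAt ℝ (g.flat v ν) p := by
    rw [flat]
    exact DifferentiableAt.sum fun σ _ => (g.differentiable_gdown ν σ p).mul (hv σ)
  rw [hflat, pd_sum _ fun ν _ => (hdflat ν).mul (hw ν)]
  simp only [pd_mul (hdflat _) (hw _), g.pd_flat hv, flat_apply, covDFlat_apply,
    Fin.sum_univ_four]
  ring

theorem act_inner {u v w : Vec} (hv : ∀ σ, Differentiable ℝ (v σ))
    (hw : ∀ σ, Differentiable ℝ (w σ)) :
    act u (g.inner v w) = g.inner (g.nabla u v) w + g.inner (g.nabla u w) v := by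
  funext p
  simp only [act, Finset.sum_apply, Pi.mul_apply, Pi.add_apply,
    g.pd_inner (fun σ => hv σ p) (fun σ => hw σ p), inner_nabla, Fin.sum_univ_four]
  ring

theorem inner_nabla_eq_neg_of_inner_eq_const {v w u : Vec} (hw : ∀ σ, Differentiable ℝ (w σ))
    (hu : ∀ σ, Differentiable ℝ (u σ)) {c : ℝ} (h : g.inner w u = fun _ => c) :
    g.inner (g.nabla v w) u = -g.inner (g.nabla v u) w := by
  have := g.act_inner (u := v) hw hu
  rw [h, act_const] at this
  exact eq_neg_of_add_eq_zero_left this.symm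

theorem inner_nabla_self_eq_zero_of_inner_eq_const {v w : Vec}
    (hw : ∀ σ, Differentiable ℝ (w σ)) {c : ℝ} (h : g.inner w w = fun _ => c) :
    g.inner (g.nabla v w) w = 0 := by
  have := g.inner_nabla_eq_neg_of_inner_eq_const (v := v) hw hw h
  funext p
  exact CharZero.eq_neg_self_iff.mp (congrFun this p)

variable {g}

theorem ginv_eq_of_frame {s l a n : Vec} (hf : Frame g s l a n) (μ ν : Fin 4) (p : Pt) :
    g.ginv μ ν p = s μ p * s ν p + a μ p * a ν p - n μ p * l ν p - l μ p * n ν p := by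
  obtain ⟨c, hc⟩ := hf.spans p (fun ρ => g.ginv ρ ν p)
  have hpair (w : Vec) : c 0 * g.inner s w p + c 1 * g.inner l w p + c 2 * g.inner a w p +
      c 3 * g.inner n w p = w ν p :=
    calc _ = ∑ σ, (∑ ρ, g.ginv ρ ν p * g.gdown ρ σ p) * w σ p := by
          simp only [inner_apply, hc, Fin.sum_univ_four]
          ring
      _ = w ν p := by simp [sum_ginv_mul_gdown]
  have hs := hpair s
  have hl := hpair l
  have ha := hpair a
  have hn := hpair n
  simp only [hf.s_unit, hf.l_s, hf.s_a, hf.n_s, hf.l_null, hf.l_a, hf.n_l, hf.a_unit, hf.n_a,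
    hf.n_null, g.inner_comm a s, g.inner_comm s l, g.inner_comm a l, g.inner_comm s n,
    g.inner_comm l n, g.inner_comm a n, Pi.one_apply, Pi.zero_apply, Pi.neg_apply] at hs hl ha hn
  linear_combination hc μ + s μ p * hs + a μ p * ha - l μ p * hn - n μ p * hl

theorem div_eq_of_frame {s l a n : Vec} (hf : Frame g s l a n) :
    g.div l = g.inner (g.nabla s l) s + g.inner (g.nabla a l) a -
      g.inner (g.nabla n l) l - g.inner (g.nabla l l) n := by
  funext p
  rw [g.div_eq_sum_covD fun μ => (hf.smooth_l μ).differentiable, Finset.sum_apply, sum_covD_self]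
  simp only [ginv_eq_of_frame hf, Pi.add_apply, Pi.sub_apply, inner_nabla, Fin.sum_univ_four]
  ring

theorem div_eq_dOne_of_frame {s l a n : Vec} (hf : Frame g s l a n) :
    g.div l = dOne (g.flat l) n l + dOne (g.flat a) l a + dOne (g.flat s) l s := by
  have hs := fun μ => (hf.smooth_s μ).differentiable
  have hl := fun μ => (hf.smooth_l μ).differentiable
  have ha := fun μ => (hf.smooth_a μ).differentiable
  rw [div_eq_of_frame hf, g.dOne_flat hl, g.dOne_flat ha, g.dOne_flat hs,
    g.inner_nabla_self_eq_zero_of_inner_eq_const hl hf.l_null,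
    g.inner_nabla_self_eq_zero_of_inner_eq_const ha hf.a_unit,
    g.inner_nabla_self_eq_zero_of_inner_eq_const hs hf.s_unit,
    g.inner_nabla_eq_neg_of_inner_eq_const ha hl ((g.inner_comm a l).trans hf.l_a),
    g.inner_nabla_eq_neg_of_inner_eq_const hs hl ((g.inner_comm s l).trans hf.l_s)]
  ring

end Lorentzian

end FFE

theorem FFE.divergence_M_iff_general (g : Lorentzian)
    (s a n : Vec) (hframe : Frame g s (Mvec g) a n) :
    g.div (Mvec g) = 0 ↔
      dOne (g.flat (Mvec g)) n (Mvec g) + dOne (g.flat a) (Mvec g) a +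
        dOne (g.flat s) (Mvec g) s = 0 := by
  rw [Lorentzian.div_eq_dOne_of_frame hframe]

/-- In the specific null foliation adapted frame `(s, M, α♯, n)`,
where `M` has chart components `M^r = g^{r3}g^{34} − g^{33}g^{r4}` (a null vector
field tangent to the leaves), one has `*d*M♭ = 0` (equivalently `∇_μ M^μ = 0`) if
and only if `dM♭(n,M) + dα(M,α♯) + ds♭(M,s) = 0`. -/
theorem FFE.divergence_M_iff (g : Lorentzian) (hdeg : g.NullAdapted)
    (s a n : Vec) (hframe : Frame g s (Mvec g) a n)
    (hs2 : s 2 = 0) (hs3 : s 3 = 0) :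
    g.div (Mvec g) = 0 ↔
      dOne (g.flat (Mvec g)) n (Mvec g) + dOne (g.flat a) (Mvec g) a +
        dOne (g.flat s) (Mvec g) s = 0 :=
  FFE.divergence_M_iff_general g s a n hframe
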